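/- arXiv:1205.0835 — 3 statements merged into one kernel-verified Lean document; each statement's English description precedes it below -/
import Mathlib

section
/- Let C be an N×N Hermitian positive semidefinite complex matrix, D an N×N Hermitian positive definite complex matrix, h ∈ ℂ^N, σ² > 0 and P > 0. Then the supremum over {a ∈ ℂ^N : a^H D a ≤ P} of the objective |h^H a|²/(a^H C a + σ²) equals the supremum over {a ∈ ℂ^N : a^H D a = P} of |h^H a|²/(a^H (C + (σ²/P) D) a). (For a with a^H D a = P, the denominator a^H (C + (σ²/P) D) a equals a^H C a + σ².) -/
/-!
On the sphere `a^H D a = P` the two objectives coincide, so the sphere supremum is taken over a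
subset of the ball. Conversely, scaling a nonzero `a` in the ball by `t ≥ 1` onto the sphere
multiplies the numerator by `t²` but the denominator `a^H C a + σ²` by at most `t²`, so it does
not decrease the objective; the point `a = 0` has objective `0`, below every value on the sphere.
Hence each set of values dominates the other, which forces equal suprema in `ℝ` even without
boundedness. For `N = 0` the sphere is empty and both suprema are `0`.
-/

open Matrix ComplexOrder

lemma div_add_le_mul_div_mul_add {s c σ u : ℝ} (hs : 0 ≤ s) (hc : 0 ≤ c) (hσ : 0 < σ)
    (hu : 1 ≤ u) : s / (c + σ) ≤ u * s / (u * c + σ) :=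
  calc s / (c + σ) = u * s / (u * c + u * σ) := by
        rw [← mul_add, mul_div_mul_left _ _ (by positivity)]
    _ ≤ u * s / (u * c + σ) := by gcongr; nlinarith

namespace Matrix

variable {n : Type*} [Fintype n]

lemma re_star_ofReal_smul_dotProduct_mulVec (M : Matrix n n ℂ) (t : ℝ) (a : n → ℂ) :
    (star ((t : ℂ) • a) ⬝ᵥ M *ᵥ ((t : ℂ) • a)).re = t ^ 2 * (star a ⬝ᵥ M *ᵥ a).re := by
  rw [star_smul, mulVec_smul, smul_dotProduct, dotProduct_smul, Complex.star_def,
    Complex.conj_ofReal, smul_eq_mul, smul_eq_mul, ← mul_assoc, ← Complex.ofReal_mul,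
    Complex.re_ofReal_mul, sq]

lemma norm_dotProduct_ofReal_smul_sq (v : n → ℂ) (t : ℝ) (a : n → ℂ) :
    ‖v ⬝ᵥ ((t : ℂ) • a)‖ ^ 2 = t ^ 2 * ‖v ⬝ᵥ a‖ ^ 2 := by
  rw [dotProduct_smul, norm_smul, mul_pow, Complex.norm_real, Real.norm_eq_abs, sq_abs]

lemma re_star_dotProduct_add_smul_mulVec (C D : Matrix n n ℂ) (r : ℝ) (a : n → ℂ) :
    (star a ⬝ᵥ (C + (r : ℂ) • D) *ᵥ a).re
      = (star a ⬝ᵥ C *ᵥ a).re + r * (star a ⬝ᵥ D *ᵥ a).re := by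
  rw [add_mulVec, dotProduct_add, smul_mulVec, dotProduct_smul, Complex.add_re,
    smul_eq_mul, Complex.re_ofReal_mul]

lemma PosDef.exists_sq_mul_re_dotProduct_mulVec_eq {D : Matrix n n ℂ} (hD : D.PosDef)
    {a : n → ℂ} (ha : a ≠ 0) {P : ℝ} (hP : 0 ≤ P) :
    ∃ t : ℝ, t ^ 2 * (star a ⬝ᵥ D *ᵥ a).re = P := by
  have hpos : 0 < (star a ⬝ᵥ D *ᵥ a).re := hD.re_dotProduct_pos ha
  exact ⟨√(P / (star a ⬝ᵥ D *ᵥ a).re), by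
    rw [Real.sq_sqrt (div_nonneg hP hpos.le), div_mul_cancel₀ P hpos.ne']⟩

lemma PosDef.exists_re_dotProduct_mulVec_eq_and_le_of_ne_zero {C D : Matrix n n ℂ}
    (hC : C.PosSemidef) (hD : D.PosDef) (v : n → ℂ) {σ2 P : ℝ} (hσ2 : 0 < σ2) (hP : 0 ≤ P)
    {a : n → ℂ} (ha : a ≠ 0) (haP : (star a ⬝ᵥ D *ᵥ a).re ≤ P) :
    ∃ b : n → ℂ, (star b ⬝ᵥ D *ᵥ b).re = P ∧
      ‖v ⬝ᵥ a‖ ^ 2 / ((star a ⬝ᵥ C *ᵥ a).re + σ2)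
        ≤ ‖v ⬝ᵥ b‖ ^ 2 / ((star b ⬝ᵥ C *ᵥ b).re + σ2) := by
  obtain ⟨t, ht⟩ := hD.exists_sq_mul_re_dotProduct_mulVec_eq ha hP
  have ht1 : 1 ≤ t ^ 2 := by
    have hpos : 0 < (star a ⬝ᵥ D *ᵥ a).re := hD.re_dotProduct_pos ha
    nlinarith
  refine ⟨(t : ℂ) • a, by rw [re_star_ofReal_smul_dotProduct_mulVec, ht], ?_⟩
  rw [norm_dotProduct_ofReal_smul_sq, re_star_ofReal_smul_dotProduct_mulVec]
  exact div_add_le_mul_div_mul_add (sq_nonneg _) (hC.re_dotProduct_nonneg a) hσ2 ht1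

lemma PosDef.exists_re_dotProduct_mulVec_eq_and_le [Nonempty n] {C D : Matrix n n ℂ}
    (hC : C.PosSemidef) (hD : D.PosDef) (v : n → ℂ) {σ2 P : ℝ} (hσ2 : 0 < σ2) (hP : 0 ≤ P)
    {a : n → ℂ} (haP : (star a ⬝ᵥ D *ᵥ a).re ≤ P) :
    ∃ b : n → ℂ, (star b ⬝ᵥ D *ᵥ b).re = P ∧
      ‖v ⬝ᵥ a‖ ^ 2 / ((star a ⬝ᵥ C *ᵥ a).re + σ2)
        ≤ ‖v ⬝ᵥ b‖ ^ 2 / ((star b ⬝ᵥ C *ᵥ b).re + σ2) := by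
  rcases eq_or_ne a 0 with rfl | ha
  · obtain ⟨w, hw⟩ := exists_ne (0 : n → ℂ)
    obtain ⟨t, ht⟩ := hD.exists_sq_mul_re_dotProduct_mulVec_eq hw hP
    refine ⟨(t : ℂ) • w, by rw [re_star_ofReal_smul_dotProduct_mulVec, ht], ?_⟩
    have hCtw : 0 ≤ (star ((t : ℂ) • w) ⬝ᵥ C *ᵥ ((t : ℂ) • w)).re := hC.re_dotProduct_nonneg _
    rw [dotProduct_zero, norm_zero, zero_pow two_ne_zero, zero_div]
    positivity
  · exact hD.exists_re_dotProduct_mulVec_eq_and_le_of_ne_zero hC v hσ2 hP ha haP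

end Matrix

/-- The supremum of `|h^H a|² / (a^H C a + σ²)` over the power ball
`{a : a^H D a ≤ P}` equals the supremum of `|h^H a|² / (a^H (C + (σ²/P) D) a)` over
the power sphere `{a : a^H D a = P}`. -/
theorem sup_rayleigh_ball_eq_sup_sphere
    (N : ℕ) (C D : Matrix (Fin N) (Fin N) ℂ) (hC : C.PosSemidef) (hD : D.PosDef)
    (h : Fin N → ℂ) (σ2 P : ℝ) (hσ2 : 0 < σ2) (hP : 0 < P) :
    sSup {x : ℝ | ∃ a : Fin N → ℂ, (star a ⬝ᵥ D *ᵥ a).re ≤ P ∧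
        x = ‖star h ⬝ᵥ a‖ ^ 2 / ((star a ⬝ᵥ C *ᵥ a).re + σ2)} =
    sSup {x : ℝ | ∃ a : Fin N → ℂ, (star a ⬝ᵥ D *ᵥ a).re = P ∧
        x = ‖star h ⬝ᵥ a‖ ^ 2 / (star a ⬝ᵥ (C + ((σ2 / P : ℝ) : ℂ) • D) *ᵥ a).re} := by
  have hsphere : ∀ a : Fin N → ℂ, (star a ⬝ᵥ D *ᵥ a).re = P →
      (star a ⬝ᵥ (C + ((σ2 / P : ℝ) : ℂ) • D) *ᵥ a).re = (star a ⬝ᵥ C *ᵥ a).re + σ2 :=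
    fun a ha ↦ by rw [re_star_dotProduct_add_smul_mulVec, ha, div_mul_cancel₀ σ2 hP.ne']
  rcases isEmpty_or_nonempty (Fin N) with hN | hN
  · have hzero : ∀ a : Fin N → ℂ, a = 0 := fun a ↦ Subsingleton.elim a 0
    simp [hzero, hP.ne, hP.le]
  · apply csSup_eq_csSup_of_forall_exists_le
    · rintro x ⟨a, ha, rfl⟩
      obtain ⟨b, hb, hab⟩ := hD.exists_re_dotProduct_mulVec_eq_and_le hC (star h) hσ2 hP.le ha
      exact ⟨_, ⟨b, hb, rfl⟩, by rwa [hsphere b hb]⟩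
    · rintro x ⟨a, ha, rfl⟩
      exact ⟨_, ⟨a, ha.le, rfl⟩, by rw [hsphere a ha]⟩
end

section
/- Let C be an N×N Hermitian positive semidefinite complex matrix, D an N×N Hermitian positive definite complex matrix, h ∈ ℂ^N nonzero, σ² > 0 and P > 0. If a* maximizes f(a) = |h^H a|²/(a^H C a + σ²) over the set {a ∈ ℂ^N : a^H D a ≤ P}, then the power constraint is active at the optimum: a*^H D a* = P. -/
open Matrix ComplexOrder

/-!
Along a ray `t ↦ t • a` the objective is `t² L / (t² c + σ²)` with `L = |h^H a|²` and
`c = a^H C a ≥ 0`; since `σ² > 0` this increases strictly in `t²` as soon as `L > 0`.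
Testing the optimality of `a*` against a feasible multiple of `h` shows `L > 0` at `a*`, so if
`a*` left slack in the power constraint, stretching it onto the boundary would do strictly better.
-/

section

variable {ι : Type*} [Fintype ι]

/-- Signal-to-interference-plus-noise ratio of the receive vector `a`. -/
noncomputable def sinr (h : ι → ℂ) (C : Matrix ι ι ℂ) (σ2 : ℝ) (a : ι → ℂ) : ℝ :=
  ‖star h ⬝ᵥ a‖ ^ 2 / ((star a ⬝ᵥ C *ᵥ a).re + σ2)

lemma re_star_dotProduct_mulVec_real_smul (M : Matrix ι ι ℂ) (t : ℝ) (a : ι → ℂ) :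
    (star ((t : ℂ) • a) ⬝ᵥ M *ᵥ ((t : ℂ) • a)).re = t ^ 2 * (star a ⬝ᵥ M *ᵥ a).re := by
  have : star ((t : ℂ) • a) ⬝ᵥ M *ᵥ ((t : ℂ) • a) = ((t ^ 2 : ℝ) : ℂ) * (star a ⬝ᵥ M *ᵥ a) := by
    simp only [star_smul, mulVec_smul, smul_dotProduct, dotProduct_smul, smul_eq_mul,
      Complex.star_def, Complex.conj_ofReal, Complex.ofReal_pow]
    ring
  rw [this, Complex.re_ofReal_mul]

lemma norm_dotProduct_real_smul (v a : ι → ℂ) (t : ℝ) :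
    ‖v ⬝ᵥ ((t : ℂ) • a)‖ = |t| * ‖v ⬝ᵥ a‖ := by
  simp [dotProduct_smul, Complex.norm_real]

lemma exists_re_star_dotProduct_mulVec_real_smul_eq (M : Matrix ι ι ℂ) {a : ι → ℂ}
    (ha : 0 < (star a ⬝ᵥ M *ᵥ a).re) {P : ℝ} (hP : 0 ≤ P) :
    ∃ t : ℝ, (star ((t : ℂ) • a) ⬝ᵥ M *ᵥ ((t : ℂ) • a)).re = P :=
  ⟨√(P / (star a ⬝ᵥ M *ᵥ a).re), by
    rw [re_star_dotProduct_mulVec_real_smul, Real.sq_sqrt (div_nonneg hP ha.le),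
      div_mul_cancel₀ _ ha.ne']⟩

lemma div_add_lt_mul_div_mul_add {L c σ s : ℝ} (hL : 0 < L) (hc : 0 ≤ c) (hσ : 0 < σ)
    (hs : 1 < s) : L / (c + σ) < s * L / (s * c + σ) := by
  rw [div_lt_div_iff₀ (by positivity) (by nlinarith)]
  nlinarith [mul_pos (mul_pos (sub_pos.2 hs) hL) hσ]

variable {C : Matrix ι ι ℂ} {σ2 : ℝ}

lemma sinr_pos_iff (hC : C.PosSemidef) (hσ2 : 0 < σ2) (h a : ι → ℂ) :
    0 < sinr h C σ2 a ↔ star h ⬝ᵥ a ≠ 0 := by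
  have hden : 0 < (star a ⬝ᵥ C *ᵥ a).re + σ2 := by
    have := hC.re_dotProduct_nonneg a
    rw [RCLike.re_to_complex] at this
    linarith
  rw [sinr, div_pos_iff_of_pos_right hden, sq_pos_iff, norm_ne_zero_iff]

lemma sinr_lt_sinr_real_smul (hC : C.PosSemidef) (hσ2 : 0 < σ2) {h a : ι → ℂ}
    (ha : star h ⬝ᵥ a ≠ 0) {t : ℝ} (ht : 1 < t ^ 2) :
    sinr h C σ2 a < sinr h C σ2 ((t : ℂ) • a) := by
  rw [sinr, sinr, norm_dotProduct_real_smul, re_star_dotProduct_mulVec_real_smul, mul_pow, sq_abs]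
  exact div_add_lt_mul_div_mul_add (by positivity) (hC.re_dotProduct_nonneg a) hσ2 ht

end

/-- If `a*` maximizes `|h^H a|² / (a^H C a + σ²)` over `{a : a^H D a ≤ P}` (with
`C ⪰ 0`, `D ≻ 0`, `h ≠ 0`, `σ² > 0`, `P > 0`), then the power constraint is active
at the optimum: `a*^H D a* = P`. -/
theorem power_constraint_active_at_optimum
    (N : ℕ) (C D : Matrix (Fin N) (Fin N) ℂ) (hC : C.PosSemidef) (hD : D.PosDef)
    (h : Fin N → ℂ) (hh : h ≠ 0) (σ2 P : ℝ) (hσ2 : 0 < σ2) (hP : 0 < P)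
    (astar : Fin N → ℂ) (hfeas : (star astar ⬝ᵥ D *ᵥ astar).re ≤ P)
    (hopt : ∀ a : Fin N → ℂ, (star a ⬝ᵥ D *ᵥ a).re ≤ P →
      ‖star h ⬝ᵥ a‖ ^ 2 / ((star a ⬝ᵥ C *ᵥ a).re + σ2) ≤
        ‖star h ⬝ᵥ astar‖ ^ 2 / ((star astar ⬝ᵥ C *ᵥ astar).re + σ2)) :
    (star astar ⬝ᵥ D *ᵥ astar).re = P := by
  have hsinr : ∀ a, (star a ⬝ᵥ D *ᵥ a).re ≤ P → sinr h C σ2 a ≤ sinr h C σ2 astar := hopt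
  obtain ⟨s, hs⟩ := exists_re_star_dotProduct_mulVec_real_smul_eq D (hD.re_dotProduct_pos hh) hP.le
  have hs0 : s ≠ 0 := by
    rintro rfl
    exact hP.ne (by simpa using hs)
  have hastar : star h ⬝ᵥ astar ≠ 0 := by
    rw [← sinr_pos_iff hC hσ2]
    refine ((sinr_pos_iff hC hσ2 h _).2 ?_).trans_le (hsinr _ hs.le)
    simpa [dotProduct_smul, hs0] using hh
  have hQ : 0 < (star astar ⬝ᵥ D *ᵥ astar).re :=
    hD.re_dotProduct_pos (by rintro rfl; simp at hastar)
  refine hfeas.antisymm (not_lt.1 fun hlt => ?_)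
  obtain ⟨t, ht⟩ := exists_re_star_dotProduct_mulVec_real_smul_eq D hQ hP.le
  have ht1 : 1 < t ^ 2 := by
    rw [re_star_dotProduct_mulVec_real_smul] at ht
    nlinarith
  exact (sinr_lt_sinr_real_smul hC hσ2 hastar ht1).not_ge (hsinr _ ht.le)
end

section
/- Let N ≥ 1, let X_1, …, X_N be independent real random variables, each exponentially distributed with rate 1 (mean 1). Let λ_1, …, λ_N be pairwise distinct real numbers with λ_1 > 0 and λ_i < 0 for all i ≥ 2, and let c > 0. Then the probability that Σ_{i=1}^N λ_i X_i < c equals 1 − (λ_1^{N−1} / Π_{l=2}^{N} (λ_1 − λ_l)) · e^{−c/λ_1}. -/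
/-!
Write `∑ λᵢ Xᵢ = λ₁ X₁ + V` with `V = ∑_{i ≥ 2} λᵢ Xᵢ ≤ 0` independent of `X₁`.
Integrating the exponential tail `P(X₁ ≥ t) = e^{-t}`, `t ≥ 0`, against the law of `V`
gives `P(c ≤ λ₁ X₁ + V) = E[e^{(V - c)/λ₁}]`. By independence this expectation factors
into moment generating functions `E[e^{t Xᵢ}] = 1/(1 - t)` at `t = λᵢ/λ₁ < 0`,
which produces `e^{-c/λ₁} ∏_{i ≥ 2} λ₁/(λ₁ - λᵢ)`.
-/

open MeasureTheory ProbabilityTheory Real Set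

lemma setLIntegral_exp_mul_expMeasure {r s a : ℝ} (hr : 0 ≤ r) (hs : s < r) (ha : 0 ≤ a) :
    ∫⁻ x in Ici a, ENNReal.ofReal (exp (s * x)) ∂expMeasure r =
      ENNReal.ofReal (r / (r - s) * exp ((s - r) * a)) := by
  have hpdf : Measurable (exponentialPDF r) := (measurable_exponentialPDFReal r).ennreal_ofReal
  rw [show expMeasure r = volume.withDensity (exponentialPDF r) from rfl,
    setLIntegral_withDensity_eq_setLIntegral_mul _ hpdf (by fun_prop) measurableSet_Ici,
    setLIntegral_congr Ioi_ae_eq_Ici.symm]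
  have hdens : EqOn (exponentialPDF r * fun x => ENNReal.ofReal (exp (s * x)))
      (fun x => ENNReal.ofReal (r * exp ((s - r) * x))) (Ioi a) := fun x hx => by
    rw [Pi.mul_apply, exponentialPDF_of_nonneg (ha.trans (le_of_lt hx)),
      ← ENNReal.ofReal_mul' (exp_pos _).le, mul_assoc, ← exp_add]
    ring_nf
  have hint : IntegrableOn (fun x => r * exp ((s - r) * x)) (Ioi a) :=
    (integrableOn_exp_mul_Ioi (by linarith) a).const_mul r
  rw [setLIntegral_congr_fun measurableSet_Ioi hdens, ← ofReal_integral_eq_lintegral_ofReal hint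
    (.of_forall fun x => by positivity), integral_const_mul, integral_exp_mul_Ioi (by linarith)]
  congr 1
  field_simp
  rw [← div_neg, neg_sub]

lemma expMeasure_Ici {r t : ℝ} (hr : 0 < r) (ht : 0 ≤ t) :
    expMeasure r (Ici t) = ENNReal.ofReal (exp (-(r * t))) := by
  have h := setLIntegral_exp_mul_expMeasure hr.le hr ht
  simp only [zero_mul, exp_zero, ENNReal.ofReal_one, setLIntegral_const, one_mul, sub_zero,
    div_self hr.ne'] at h
  rw [h, zero_sub, neg_mul]

lemma ae_nonneg_expMeasure (r : ℝ) : ∀ᵐ x ∂expMeasure r, 0 ≤ x := by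
  rw [ae_iff]
  simp_rw [not_le]
  exact (withDensity_apply _ measurableSet_Iio).trans (lintegral_exponentialPDF_of_nonpos le_rfl)

lemma lintegral_exp_mul_expMeasure {r s : ℝ} (hr : 0 ≤ r) (hs : s < r) :
    ∫⁻ x, ENNReal.ofReal (exp (s * x)) ∂expMeasure r = ENNReal.ofReal (r / (r - s)) := by
  rw [← Measure.restrict_eq_self_of_ae_mem (s := Ici 0) (ae_nonneg_expMeasure r),
    setLIntegral_exp_mul_expMeasure hr hs le_rfl, mul_zero, exp_zero, mul_one]

section IndependentExponentials

variable {Ω ι : Type*} [MeasurableSpace Ω] {μ : Measure Ω}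

lemma measure_le_mul_add_of_indepFun [IsFiniteMeasure μ] {U V : Ω → ℝ} (hU : Measurable U)
    (hV : Measurable V) (hUV : IndepFun U V μ) {r : ℝ} (hr : 0 < r)
    (hlaw : μ.map U = expMeasure r) (hV0 : ∀ᵐ ω ∂μ, V ω ≤ 0) {b c : ℝ} (hb : 0 < b)
    (hc : 0 ≤ c) :
    μ {ω | c ≤ b * U ω + V ω} = ∫⁻ ω, ENNReal.ofReal (exp (r * (V ω - c) / b)) ∂μ := by
  have : IsProbabilityMeasure (expMeasure r) := isProbabilityMeasure_expMeasure hr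
  have hS : MeasurableSet {p : ℝ × ℝ | c ≤ b * p.1 + p.2} :=
    measurableSet_le (by fun_prop) (by fun_prop)
  have hslice : ∀ v ≤ 0, expMeasure r {u | c ≤ b * u + v} =
      ENNReal.ofReal (exp (r * (v - c) / b)) := fun v hv => by
    have : {u | c ≤ b * u + v} = Ici ((c - v) / b) := by
      ext u
      simp only [mem_ofPred_eq, mem_Ici, div_le_iff₀ hb]
      constructor <;> intro <;> linarith
    rw [this, expMeasure_Ici hr (div_nonneg (by linarith) hb.le)]
    congr 2
    ring
  calc μ {ω | c ≤ b * U ω + V ω}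
      = μ.map (fun ω => (U ω, V ω)) {p | c ≤ b * p.1 + p.2} :=
        (Measure.map_apply (hU.prodMk hV) hS).symm
    _ = ((μ.map U).prod (μ.map V)) {p | c ≤ b * p.1 + p.2} := by
      rw [(indepFun_iff_map_prod_eq_prod_map_map hU.aemeasurable hV.aemeasurable).1 hUV]
    _ = ∫⁻ v, ENNReal.ofReal (exp (r * (v - c) / b)) ∂μ.map V := by
      rw [Measure.prod_apply_symm hS, hlaw]
      refine lintegral_congr_ae ?_
      filter_upwards [(ae_map_iff hV.aemeasurable measurableSet_Iic).2 hV0] with v hv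
      exact hslice v hv
    _ = ∫⁻ ω, ENNReal.ofReal (exp (r * (V ω - c) / b)) ∂μ := lintegral_map (by fun_prop) hV

variable {X : ι → Ω → ℝ} (hmeas : ∀ i, Measurable (X i)) (hindep : iIndepFun X μ) {r : ℝ}
include hmeas hindep

lemma lintegral_exp_sum_mul_of_iIndepFun (hr : 0 ≤ r) (hlaw : ∀ i, μ.map (X i) = expMeasure r)
    (s : Finset ι) {t : ι → ℝ} (ht : ∀ i ∈ s, t i < r) :
    ∫⁻ ω, ENNReal.ofReal (exp (∑ i ∈ s, t i * X i ω)) ∂μ =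
      ∏ i ∈ s, ENNReal.ofReal (r / (r - t i)) := by
  simp_rw [exp_sum, ENNReal.ofReal_prod_of_nonneg fun i _ => (exp_pos _).le]
  rw [lintegral_prod_eq_prod_lintegral_of_indepFun s
    (fun i ω => ENNReal.ofReal (exp (t i * X i ω)))
    (hindep.comp (fun i x => ENNReal.ofReal (exp (t i * x))) fun i => by fun_prop)
    fun i => by fun_prop]
  refine Finset.prod_congr rfl fun i hi => ?_
  rw [← lintegral_exp_mul_expMeasure hr (ht i hi), ← hlaw i,
    lintegral_map (by fun_prop) (hmeas i)]

lemma indepFun_sum_mul_of_notMem {s : Finset ι} {i₀ : ι} (hi₀ : i₀ ∉ s)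
    (a : ι → ℝ) : IndepFun (X i₀) (fun ω => ∑ i ∈ s, a i * X i ω) μ := by
  classical
  let g : ι → ℝ → ℝ := fun i x => (if i = i₀ then 1 else a i) * x
  have h := (hindep.comp g fun i => measurable_id.const_mul _).indepFun_finsetSum_of_notMem
    (fun i => (hmeas i).const_mul _) hi₀
  convert h.symm using 1
  · ext ω
    simp [g]
  · ext ω
    simp only [Finset.sum_apply, Function.comp_apply, g]
    refine Finset.sum_congr rfl fun i hi => ?_
    rw [if_neg (ne_of_mem_of_not_mem hi hi₀)]

lemma measureReal_le_mul_add_sum_mul (hr : 0 < r)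
    (hlaw : ∀ i, μ.map (X i) = expMeasure r) {s : Finset ι} {i₀ : ι} (hi₀ : i₀ ∉ s)
    {a : ι → ℝ} (ha : ∀ i ∈ s, a i ≤ 0) {b c : ℝ} (hb : 0 < b) (hc : 0 ≤ c) :
    μ.real {ω | c ≤ b * X i₀ ω + ∑ i ∈ s, a i * X i ω} =
      exp (-(r * c / b)) * ∏ i ∈ s, b / (b - a i) := by
  have := hindep.isProbabilityMeasure
  have hV0 : ∀ᵐ ω ∂μ, ∑ i ∈ s, a i * X i ω ≤ 0 := by
    have hX0 := (Filter.eventually_all_finset s).2 fun i _ =>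
      ae_of_ae_map (hmeas i).aemeasurable ((hlaw i).symm ▸ ae_nonneg_expMeasure r)
    filter_upwards [hX0] with ω hω
    exact Finset.sum_nonpos fun i hi => mul_nonpos_of_nonpos_of_nonneg (ha i hi) (hω i hi)
  have hexp : ∀ ω, exp (r * (∑ i ∈ s, a i * X i ω - c) / b) =
      exp (-(r * c / b)) * exp (∑ i ∈ s, r * a i / b * X i ω) := fun ω => by
    rw [← exp_add, Finset.sum_congr rfl fun i _ => div_mul_eq_mul_div (r * a i) b (X i ω),
      ← Finset.sum_div]
    simp only [mul_assoc, ← Finset.mul_sum]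
    congr 1
    ring
  have hrate : ∀ i ∈ s, r * a i / b < r := fun i hi =>
    (div_nonpos_of_nonpos_of_nonneg (mul_nonpos_of_nonneg_of_nonpos hr.le (ha i hi))
      hb.le).trans_lt hr
  rw [measureReal_def, measure_le_mul_add_of_indepFun (hmeas i₀) (by fun_prop)
    (indepFun_sum_mul_of_notMem hmeas hindep hi₀ a) hr (hlaw i₀) hV0 hb hc]
  simp_rw [hexp, ENNReal.ofReal_mul (exp_pos _).le]
  rw [lintegral_const_mul _ (by fun_prop),
    lintegral_exp_sum_mul_of_iIndepFun hmeas hindep hr.le hlaw s hrate, ENNReal.toReal_mul,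
    ENNReal.toReal_ofReal (exp_pos _).le, ENNReal.toReal_prod]
  congr 1
  refine Finset.prod_congr rfl fun i hi => ?_
  have hgap : 0 < b - a i := by linarith [ha i hi]
  rw [ENNReal.toReal_ofReal (div_pos hr (by linarith [hrate i hi])).le]
  field_simp

end IndependentExponentials

theorem outage_probability_weighted_exponentials_general
    (n : ℕ) (Ω : Type*) [MeasurableSpace Ω] (μ : Measure Ω) [IsProbabilityMeasure μ]
    (X : Fin (n + 1) → Ω → ℝ) (hmeas : ∀ i, Measurable (X i))
    (hindep : iIndepFun X μ)
    (hdist : ∀ i, μ.map (X i) = expMeasure 1)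
    (lam : Fin (n + 1) → ℝ)
    (hpos : 0 < lam 0) (hneg : ∀ i : Fin (n + 1), i ≠ 0 → lam i < 0)
    (c : ℝ) (hc : 0 < c) :
    (μ {ω | ∑ i, lam i * X i ω < c}).toReal =
      1 - lam 0 ^ n / (∏ l ∈ Finset.univ.erase 0, (lam 0 - lam l)) *
        Real.exp (-c / lam 0) := by
  have hevent : {ω | ∑ i, lam i * X i ω < c} =
      {ω | c ≤ lam 0 * X 0 ω + ∑ i ∈ Finset.univ.erase 0, lam i * X i ω}ᶜ := by
    ext ω
    rw [mem_compl_iff, mem_ofPred_eq, mem_ofPred_eq, not_le,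
      Finset.add_sum_erase _ (fun i => lam i * X i ω) (Finset.mem_univ 0)]
  rw [hevent, ← measureReal_def,
    probReal_compl_eq_one_sub (measurableSet_le (by fun_prop) (by fun_prop)),
    measureReal_le_mul_add_sum_mul hmeas hindep one_pos hdist (Finset.notMem_erase 0 _)
      (fun i hi => (hneg i (Finset.ne_of_mem_erase hi)).le) hpos hc.le,
    Finset.prod_div_distrib, Finset.prod_const, Finset.card_erase_of_mem (Finset.mem_univ 0),
    Finset.card_univ, Fintype.card_fin, add_tsub_cancel_right, one_mul, neg_div, mul_comm]

/-- Closed-form outage probability: for independent unit-rate exponential random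
variables `X₁,…,X_N` (here `N = n+1 ≥ 1`) and pairwise distinct weights `λᵢ` with
`λ₁ > 0` and `λᵢ < 0` for `i ≥ 2`, and any `c > 0`,
`Pr(Σ λᵢ Xᵢ < c) = 1 − (λ₁^{N−1}/Π_{l≥2}(λ₁−λ_l)) e^{−c/λ₁}`. -/
theorem outage_probability_weighted_exponentials
    (n : ℕ) (Ω : Type*) [MeasurableSpace Ω] (μ : Measure Ω) [IsProbabilityMeasure μ]
    (X : Fin (n + 1) → Ω → ℝ) (hmeas : ∀ i, Measurable (X i))
    (hindep : iIndepFun X μ)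
    (hdist : ∀ i, μ.map (X i) = expMeasure 1)
    (lam : Fin (n + 1) → ℝ) (hinj : Function.Injective lam)
    (hpos : 0 < lam 0) (hneg : ∀ i : Fin (n + 1), i ≠ 0 → lam i < 0)
    (c : ℝ) (hc : 0 < c) :
    (μ {ω | ∑ i, lam i * X i ω < c}).toReal =
      1 - lam 0 ^ n / (∏ l ∈ Finset.univ.erase 0, (lam 0 - lam l)) *
        Real.exp (-c / lam 0) :=
  outage_probability_weighted_exponentials_general n Ω μ X hmeas hindep hdist lam hpos hneg c hc
end
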